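/- arXiv:2008.00332 — 7 statements merged into one kernel-verified Lean document; each statement's English description precedes it below -/
import Mathlib

section
/- The recurrence Q(Y) = 2√Y · Q(√Y) + c·Y with base case Q(Y) ≤ c·Y for Y ≤ m (with m ≥ 2) satisfies Q(n) = O(n · log n / log m). Precisely: if Q : ℕ → ℝ satisfies Q(Y) ≤ 2·⌈√Y⌉·Q(⌈√Y⌉) + c·Y for Y > m and Q(Y) ≤ c·Y for Y ≤ m, then there exists c' with Q(n) ≤ c'·n·(log n)/(log m) for all n ≥ 2. -/
/-!
By strong induction, `Q n ≤ A * n * (log n - 1/2)` for all `n ≥ 2`. For `s = ⌈√n⌉ ≤ √n + 1` we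
have `log s ≤ (log n)/2 + 1/√n`, so the recursive term `2 s * A s (log s - 1/2)` is
`A n (log n - 1)` up to `O(√n log n)`: the shift by `1/2` saves `A n / 2`, which absorbs `c n` and
the error term once `n` is large and `A ≥ 4|c|`. The finitely many small `n` are covered by
taking `A` large.
-/
open Real Filter

lemma log_add_one_le_log_add_inv {x : ℝ} (hx : 0 < x) : log (x + 1) ≤ log x + x⁻¹ := by
  have h := log_le_sub_one_of_pos (show 0 < (x + 1) / x by positivity)
  rw [log_div (by positivity) hx.ne', add_div, div_self hx.ne', one_div] at h
  linarith

lemma eventually_mul_log_add_le_mul_sqrt (a b : ℝ) {k : ℝ} (hk : 0 < k) :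
    ∀ᶠ x in atTop, a * log x + b ≤ k * √x := by
  have hlog : log =o[atTop] fun x => √x :=
    (isLittleO_log_rpow_atTop one_half_pos).congr_right fun x => (sqrt_eq_rpow x).symm
  have hb : (fun _ => b) =o[atTop] fun x => √x := isLittleO_const_log_atTop.trans hlog
  filter_upwards [((hlog.const_mul_left a).add hb).def hk] with x hx
  rw [Real.norm_of_nonneg (sqrt_nonneg x)] at hx
  exact (le_abs_self _).trans hx

lemma two_le_ceil_sqrt {n : ℕ} (hn : 2 ≤ n) : 2 ≤ ⌈√(n : ℝ)⌉₊ := by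
  have : 1 < √(n : ℝ) := by
    rw [lt_sqrt zero_le_one]; exact_mod_cast (by omega : 1 < n)
  have := Nat.lt_ceil.mpr (by exact_mod_cast this : ((1 : ℕ) : ℝ) < √(n : ℝ))
  omega

lemma ceil_sqrt_lt_self {n : ℕ} (hn : 3 ≤ n) : ⌈√(n : ℝ)⌉₊ < n := by
  have hn' : (3 : ℝ) ≤ n := by exact_mod_cast hn
  have hsq := sq_sqrt (Nat.cast_nonneg (α := ℝ) n)
  have hsqrt : √(n : ℝ) + 1 ≤ n := by nlinarith [sqrt_nonneg (n : ℝ)]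
  exact_mod_cast (Nat.ceil_lt_add_one (sqrt_nonneg _)).trans_le hsqrt

lemma eventually_two_mul_ceil_sqrt_sq_mul_log_add_le : ∀ᶠ n : ℕ in atTop,
    2 * (⌈√(n : ℝ)⌉₊ : ℝ) ^ 2 * (log ⌈√(n : ℝ)⌉₊ - 1 / 2) + n / 4 ≤ n * (log n - 1 / 2) := by
  filter_upwards [tendsto_natCast_atTop_atTop.eventually
    (eventually_mul_log_add_le_mul_sqrt 3 8 (by norm_num : (0 : ℝ) < 1 / 4)),
    eventually_ge_atTop 2] with n hsmall hn
  set t := √(n : ℝ)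
  set s := ⌈t⌉₊
  set u := log (n : ℝ)
  have hn' : (2 : ℝ) ≤ n := by exact_mod_cast hn
  have htn : t ^ 2 = n := sq_sqrt (Nat.cast_nonneg n)
  have ht : 1 ≤ t := one_le_sqrt.mpr (by linarith)
  have hu : 0 ≤ u := log_nonneg (by linarith)
  have hts : t ≤ s := Nat.le_ceil t
  have hst : (s : ℝ) ≤ t + 1 := (Nat.ceil_lt_add_one (sqrt_nonneg _)).le
  have hlogs_ge : 1 / 2 ≤ log s := by
    have : (2 : ℝ) ≤ s := by exact_mod_cast two_le_ceil_sqrt hn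
    linarith [log_two_gt_d9, log_le_log two_pos this]
  have hlogs_le : log s ≤ u / 2 + t⁻¹ := calc
    log s ≤ log (t + 1) := log_le_log (by linarith) hst
    _ ≤ log t + t⁻¹ := log_add_one_le_log_add_inv (by linarith)
    _ = u / 2 + t⁻¹ := by rw [log_sqrt (Nat.cast_nonneg n)]
  have htinv : t * t⁻¹ = 1 := mul_inv_cancel₀ (by linarith)
  have htinv_le : t⁻¹ ≤ 1 := inv_le_one_of_one_le₀ ht
  rw [← htn]
  calc 2 * (s : ℝ) ^ 2 * (log s - 1 / 2) + t ^ 2 / 4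
      ≤ 2 * (t + 1) ^ 2 * (u / 2 + t⁻¹ - 1 / 2) + t ^ 2 / 4 := by
        gcongr 2 * ?_ ^ 2 * ?_ + _
        linarith
    _ = (t + 1) ^ 2 * (u - 1) + 2 * (t + 2 + t⁻¹) + t ^ 2 / 4 := by
        linear_combination (2 * t + 4) * htinv
    -- `(2t + 1)(u - 1) + 2t + 6 ≤ t (3u + 8) ≤ t² / 4`
    _ ≤ t ^ 2 * (u - 1 / 2) := by nlinarith

lemma mul_log_sub_half_pos {n : ℕ} (hn : 2 ≤ n) : 0 < (n : ℝ) * (log n - 1 / 2) := by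
  have hn' : (2 : ℝ) ≤ n := by exact_mod_cast hn
  have := log_le_log two_pos hn'
  have := log_two_gt_d9
  exact mul_pos (by linarith) (by linarith)

lemma exists_le_mul_mul_log_sub_half_of_le_ceil_sqrt (Q : ℕ → ℝ) (m : ℕ) (c : ℝ)
    (hrec : ∀ Y : ℕ, m < Y → Q Y ≤ 2 * (⌈√(Y : ℝ)⌉₊ : ℝ) * Q ⌈√(Y : ℝ)⌉₊ + c * Y) :
    ∃ A, 0 ≤ A ∧ ∀ n : ℕ, 2 ≤ n → Q n ≤ A * (n * (log n - 1 / 2)) := by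
  obtain ⟨N, hN⟩ := eventually_atTop.mp eventually_two_mul_ceil_sqrt_sq_mul_log_add_le
  set K := max m (max N 3)
  obtain ⟨M, hM⟩ := ((Set.finite_Icc 2 K).image fun k => Q k / (k * (log k - 1 / 2))).bddAbove
  refine ⟨max (4 * |c|) M, by positivity, fun n ↦ ?_⟩
  set A := max (4 * |c|) M
  induction n using Nat.strong_induction_on with | _ n ih => ?_
  intro hn
  by_cases hnK : n ≤ K
  · rw [← div_le_iff₀ (mul_log_sub_half_pos hn)]
    exact (hM ⟨n, ⟨hn, hnK⟩, rfl⟩).trans (le_max_right _ _)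
  have hmn : m < n := by omega
  set s := ⌈√(n : ℝ)⌉₊
  have hs : s < n := ceil_sqrt_lt_self (by omega)
  have hcA : c ≤ A / 4 := by linarith [le_abs_self c, le_max_left (4 * |c|) M]
  calc Q n ≤ 2 * s * Q s + c * n := hrec n hmn
    _ ≤ 2 * s * (A * (s * (log s - 1 / 2))) + c * n := by
        gcongr; exact ih s hs (two_le_ceil_sqrt hn)
    _ = A * (2 * (s : ℝ) ^ 2 * (log s - 1 / 2)) + c * n := by ring
    _ ≤ A * (n * (log n - 1 / 2) - n / 4) + A / 4 * n := by
        gcongr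
        linarith [hN n (by omega)]
    _ = A * (n * (log n - 1 / 2)) := by ring

theorem stmt_1_general (Q : ℕ → ℝ) (m : ℕ) (c : ℝ) (hm : 2 ≤ m)
    (hrec : ∀ Y : ℕ, m < Y →
      Q Y ≤ 2 * (⌈Real.sqrt Y⌉₊ : ℝ) * Q ⌈Real.sqrt Y⌉₊ + c * Y) :
    ∃ c' : ℝ, ∀ n : ℕ, 2 ≤ n →
      Q n ≤ c' * n * Real.log n / Real.log m := by
  obtain ⟨A, hA, hQ⟩ := exists_le_mul_mul_log_sub_half_of_le_ceil_sqrt Q m c hrec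
  have hlogm : 0 < log m := log_pos (by exact_mod_cast hm)
  refine ⟨A * log m, fun n hn ↦ ?_⟩
  calc Q n ≤ A * (n * (log n - 1 / 2)) := hQ n hn
    _ ≤ A * (n * log n) := by gcongr; linarith
    _ = A * log m * n * log n / log m := by field_simp

/-- The recurrence `Q(Y) = 2√Y·Q(⌈√Y⌉) + c·Y` with base `Q(Y) ≤ c·Y` for `Y ≤ m`
satisfies `Q(n) = O(n · log n / log m)`. -/
theorem stmt_1 (Q : ℕ → ℝ) (m : ℕ) (c : ℝ) (hc : 0 < c) (hm : 2 ≤ m)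
    (hrec : ∀ Y : ℕ, m < Y →
      Q Y ≤ 2 * (⌈Real.sqrt Y⌉₊ : ℝ) * Q ⌈Real.sqrt Y⌉₊ + c * Y)
    (hbase : ∀ Y : ℕ, Y ≤ m → Q Y ≤ c * Y) :
    ∃ c' : ℝ, ∀ n : ℕ, 2 ≤ n →
      Q n ≤ c' * n * Real.log n / Real.log m :=
  stmt_1_general Q m c hm hrec
end

section
/- Let S be a set of n distinct real numbers, and let Π ⊆ S be obtained by including each element independently with probability q = 1/log n. Sort Π and take every (log² n)-th element as a pivot. Then, except with probability negligible in n, the number of elements of S lying strictly between two consecutive pivots is at most log³ n + o(log³ n). Formally: for any t ≥ (1+ε)·log³ n with constant ε > 0, the probability that some interval between consecutive pivots contains more than t elements of S is at most n·exp(−Ω(ε²·log³ n·q)) = n·exp(−Ω(ε²·log² n)). -/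
open scoped Classical

/-- The list of pivots: every `K`-th element of the sorted sample `P`. -/
noncomputable def pivotList (P : Finset ℝ) (K : ℕ) : List ℝ :=
  (List.range ((P.sort (· ≤ ·)).length / K)).map
    (fun j => (P.sort (· ≤ ·)).getD (j * K) 0)

/-- The bad event: some pair of consecutive pivots has more than `t` elements of
`S` strictly between them. -/
noncomputable def badPivot (S P : Finset ℝ) (K : ℕ) (t : ℝ) : Prop :=
  ∃ j : ℕ, j + 1 < (pivotList P K).length ∧
    t < ((S.filter (fun x =>
        (pivotList P K).getD j 0 < x ∧ x < (pivotList P K).getD (j + 1) 0)).card : ℝ)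

/-!
If the pivots are bad, two sample points `a < b` have more than `t` elements of `S` strictly
between them but fewer than `K = ⌈log² n⌉₊` sampled ones. For a fixed interval `I` with
`#I ≥ (1+ε) log³ n`, Markov's inequality for `θ ^ #(P ∩ I)` with `θ = (1+ε)⁻¹` bounds the
probability of this by `(1+ε)^(K-1) (1 - qε/(1+ε))^#I ≤ exp (-(ε - log (1+ε)) log² n)`.
A union bound over the at most `n²` pairs `(a, b)` costs a factor `n²`, one `n` of which is
absorbed into the exponent once `log n ≥ 2 / (ε - log (1+ε))`.
-/

open Finset

section Sampling

variable {α : Type*} [DecidableEq α]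

theorem sum_powerset_weight_mul_pow_card_inter {R : Type*} [CommRing R] {S I : Finset α}
    (hI : I ⊆ S) (q θ : R) :
    ∑ P ∈ S.powerset, q ^ #P * (1 - q) ^ (#S - #P) * θ ^ #(P ∩ I)
      = (q * θ + (1 - q)) ^ #I := by
  have hprod : ∏ x ∈ S, (q * (if x ∈ I then θ else 1) + (1 - q))
      = (q * θ + (1 - q)) ^ #I := by
    rw [prod_congr rfl (g := fun x => if x ∈ I then q * θ + (1 - q) else 1)
      (fun x _ => by split_ifs <;> ring), prod_ite_mem, inter_eq_right.mpr hI, prod_const]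
  rw [← hprod, prod_add]
  refine sum_congr rfl fun P hP => ?_
  rw [prod_mul_distrib, prod_const, prod_ite_mem, prod_const, prod_const,
    card_sdiff_of_subset (mem_powerset.mp hP)]
  ring

variable {R : Type*} [Field R] [LinearOrder R] [IsStrictOrderedRing R]

theorem sum_powerset_filter_card_inter_lt_le {S I : Finset α} (hI : I ⊆ S) {q θ : R}
    (hq0 : 0 ≤ q) (hq1 : q ≤ 1) (hθ0 : 0 < θ) (hθ1 : θ ≤ 1) (K : ℕ) :
    ∑ P ∈ S.powerset with #(P ∩ I) < K, q ^ #P * (1 - q) ^ (#S - #P)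
      ≤ θ⁻¹ ^ (K - 1) * (q * θ + (1 - q)) ^ #I := by
  have hw : ∀ P : Finset α, 0 ≤ q ^ #P * (1 - q) ^ (#S - #P) :=
    fun P => mul_nonneg (pow_nonneg hq0 _) (pow_nonneg (sub_nonneg.mpr hq1) _)
  rw [← sum_powerset_weight_mul_pow_card_inter hI, mul_sum]
  calc ∑ P ∈ S.powerset with #(P ∩ I) < K, q ^ #P * (1 - q) ^ (#S - #P)
      ≤ ∑ P ∈ S.powerset with #(P ∩ I) < K,
          θ⁻¹ ^ (K - 1) * (q ^ #P * (1 - q) ^ (#S - #P) * θ ^ #(P ∩ I)) := by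
        refine sum_le_sum fun P hP => ?_
        have hmarkov : 1 ≤ θ⁻¹ ^ (K - 1) * θ ^ #(P ∩ I) := by
          rw [inv_pow, ← div_eq_inv_mul, one_le_div₀ (pow_pos hθ0 _)]
          exact pow_le_pow_of_le_one hθ0.le hθ1 (by have := (mem_filter.mp hP).2; omega)
        nlinarith [hw P]
    _ ≤ _ := sum_le_sum_of_subset_of_nonneg (filter_subset _ _) fun P _ _ => by
        have := hw P; positivity

theorem sum_powerset_filter_card_inter_lt_le_exp {S I : Finset α} (hI : I ⊆ S) {q ε : ℝ}
    (hq0 : 0 ≤ q) (hq1 : q ≤ 1) (hε : 0 ≤ ε) (K : ℕ) :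
    ∑ P ∈ S.powerset with #(P ∩ I) < K, q ^ #P * (1 - q) ^ (#S - #P)
      ≤ Real.exp ((K - 1 : ℕ) * Real.log (1 + ε) - q * ε / (1 + ε) * #I) := by
  have h1ε : 0 < 1 + ε := by linarith
  have hbase : q * (1 + ε)⁻¹ + (1 - q) = -(q * ε / (1 + ε)) + 1 := by field_simp; ring
  calc _ ≤ (1 + ε)⁻¹⁻¹ ^ (K - 1) * (q * (1 + ε)⁻¹ + (1 - q)) ^ #I :=
        sum_powerset_filter_card_inter_lt_le hI hq0 hq1 (inv_pos.mpr h1ε)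
          (inv_le_one_of_one_le₀ (by linarith)) K
    _ ≤ Real.exp (Real.log (1 + ε)) ^ (K - 1) * Real.exp (-(q * ε / (1 + ε))) ^ #I := by
        rw [inv_inv, Real.exp_log h1ε, hbase]
        gcongr
        · rw [← hbase]; positivity
        · exact Real.add_one_le_exp _
    _ = _ := by
        rw [← Real.exp_nat_mul, ← Real.exp_nat_mul, ← Real.exp_add]
        ring_nf

theorem sum_sample_few_hits_le {S I : Finset α} (hI : I ⊆ S) {L ε : ℝ} (hL : 1 ≤ L)
    (hε : 0 ≤ ε) (hI_card : (1 + ε) * L ^ 3 ≤ #I) :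
    ∑ P ∈ S.powerset with #(P ∩ I) < ⌈L ^ 2⌉₊, (1 / L) ^ #P * (1 - 1 / L) ^ (#S - #P)
      ≤ Real.exp (-((ε - Real.log (1 + ε)) * L ^ 2)) := by
  have hL0 : 0 < L := by linarith
  refine (sum_powerset_filter_card_inter_lt_le_exp hI (by positivity)
    ((div_le_one hL0).mpr hL) hε _).trans (Real.exp_le_exp.mpr ?_)
  have hK : ((⌈L ^ 2⌉₊ - 1 : ℕ) : ℝ) ≤ L ^ 2 :=
    (Nat.lt_ceil.mp (Nat.sub_one_lt (Nat.ceil_pos.mpr (by positivity)).ne')).le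
  have hhits : ε * L ^ 2 ≤ 1 / L * ε / (1 + ε) * #I :=
    calc ε * L ^ 2 = 1 / L * ε / (1 + ε) * ((1 + ε) * L ^ 3) := by field_simp
      _ ≤ _ := by gcongr
  nlinarith [Real.log_nonneg (by linarith : (1 : ℝ) ≤ 1 + ε)]

end Sampling

theorem sum_filter_le_sum_sum_filter {ι β M : Type*} [AddCommMonoid M] [PartialOrder M]
    [IsOrderedAddMonoid M] {s : Finset β} {T : Finset ι} {p : β → Prop} [DecidablePred p]
    {E : ι → β → Prop} [∀ i, DecidablePred (E i)] {f : β → M} (hf : ∀ x ∈ s, 0 ≤ f x)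
    (h : ∀ x ∈ s, p x → ∃ i ∈ T, E i x) :
    ∑ x ∈ s with p x, f x ≤ ∑ i ∈ T, ∑ x ∈ s with E i x, f x := by
  simp_rw [sum_filter]
  rw [sum_comm]
  refine sum_le_sum fun x hx => ?_
  split_ifs with hpx
  · obtain ⟨i, hi, hE⟩ := h x hx hpx
    exact (if_pos hE).symm.le.trans
      (single_le_sum (f := fun i => if E i x then f x else 0)
        (fun j _ => by split_ifs <;> simp [hf x hx]) hi)
  · exact sum_nonneg fun j _ => by split_ifs <;> simp [hf x hx]

theorem card_filter_between_orderEmbOfFin {α : Type*} [LinearOrder α] (P : Finset α)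
    (i j : Fin #P) :
    #{x ∈ P | P.orderEmbOfFin rfl i < x ∧ x < P.orderEmbOfFin rfl j} = j - i - 1 := by
  set e := P.orderEmbOfFin rfl
  have : {x ∈ P | e i < x ∧ x < e j} = (Ioo i j).map e.toEmbedding := by
    ext x
    simp only [mem_filter, mem_map, mem_Ioo, RelEmbedding.coe_toEmbedding]
    constructor
    · rintro ⟨hx, hix, hxj⟩
      obtain ⟨k, rfl⟩ : x ∈ Set.range e := by rw [range_orderEmbOfFin]; exact hx
      exact ⟨k, ⟨e.lt_iff_lt.mp hix, e.lt_iff_lt.mp hxj⟩, rfl⟩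
    · rintro ⟨k, ⟨hik, hkj⟩, rfl⟩
      exact ⟨orderEmbOfFin_mem _ _ _, e.lt_iff_lt.mpr hik, e.lt_iff_lt.mpr hkj⟩
  rw [this, card_map, Fin.card_Ioo]

theorem length_pivotList (P : Finset ℝ) (K : ℕ) : (pivotList P K).length = #P / K := by
  simp [pivotList]

theorem pivotList_getD {P : Finset ℝ} {K j : ℕ} (hjK : j * K < #P) (hj : j < #P / K) :
    (pivotList P K).getD j 0 = P.orderEmbOfFin rfl ⟨j * K, hjK⟩ := by
  have hlen : j * K < (P.sort (· ≤ ·)).length := by simpa using hjK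
  simp [pivotList, List.getD_eq_getElem?_getD, hj, orderEmbOfFin_apply]
  exact List.getD_eq_getElem _ _ hlen

theorem exists_interval_of_badPivot {S P : Finset ℝ} (hPS : P ⊆ S) {K : ℕ} {t : ℝ}
    (h : badPivot S P K t) :
    ∃ a ∈ S, ∃ b ∈ S, t < #{x ∈ S | a < x ∧ x < b} ∧ #(P ∩ {x ∈ S | a < x ∧ x < b}) < K := by
  obtain ⟨j, hj, ht⟩ := h
  rw [length_pivotList] at hj
  have hK : 0 < K := Nat.pos_of_ne_zero (by rintro rfl; simp at hj)
  have hstep : (j + 1) * K = j * K + K := Nat.succ_mul j K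
  have hj1 : (j + 1) * K < #P := by
    have := (Nat.le_div_iff_mul_le hK).mp hj
    rw [Nat.succ_mul] at this
    omega
  have hj0 : j * K < #P := by omega
  rw [pivotList_getD hj0 (by omega), pivotList_getD hj1 hj] at ht
  refine ⟨_, hPS (orderEmbOfFin_mem _ _ _), _, hPS (orderEmbOfFin_mem _ _ _), ht, ?_⟩
  rw [inter_filter, inter_eq_left.mpr hPS, card_filter_between_orderEmbOfFin]
  change (j + 1) * K - j * K - 1 < K
  omega

theorem sq_mul_exp_neg_le {x g : ℝ} (hx : 0 < x) (hg : 0 ≤ g) (hgx : 2 ≤ g * Real.log x) :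
    x ^ 2 * Real.exp (-(g * Real.log x ^ 2)) ≤ x * Real.exp (-(g / 2 * Real.log x ^ 2)) := by
  have hL : 0 ≤ Real.log x := by
    by_contra! h
    nlinarith
  calc x ^ 2 * Real.exp (-(g * Real.log x ^ 2))
      = x * Real.exp (Real.log x - g * Real.log x ^ 2) := by
        rw [sub_eq_add_neg, Real.exp_add, Real.exp_log hx]; ring
    _ ≤ x * Real.exp (-(g / 2 * Real.log x ^ 2)) := by
        gcongr
        nlinarith

/-- Choosing a sample `P ⊆ S` by including each of the `n` elements independently
with probability `q = 1/log n`, and taking every `(log² n)`-th element of the sorted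
sample as a pivot: for any `t ≥ (1+ε)·log³ n`, the probability that some interval
between consecutive pivots contains more than `t` elements of `S` is at most
`n·exp(−Ω(ε²·log² n))`. -/
theorem stmt_5 : ∀ ε : ℝ, 0 < ε → ∃ c : ℝ, 0 < c ∧ ∃ N : ℕ, ∀ n : ℕ, N ≤ n →
    ∀ S : Finset ℝ, S.card = n →
    ∀ t : ℝ, (1 + ε) * (Real.log n) ^ 3 ≤ t →
    (∑ P ∈ S.powerset.filter (fun P => badPivot S P ⌈(Real.log n) ^ 2⌉₊ t),
        (1 / Real.log n) ^ P.card * (1 - 1 / Real.log n) ^ (n - P.card))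
      ≤ (n : ℝ) * Real.exp (-c * ε ^ 2 * (Real.log n) ^ 2) := by
  intro ε hε
  set g := ε - Real.log (1 + ε)
  have hg : 0 < g := by
    have := Real.log_lt_sub_one_of_pos (by linarith : 0 < 1 + ε) (by linarith)
    linarith
  refine ⟨g / (2 * ε ^ 2), by positivity, ⌈Real.exp (1 + 2 / g)⌉₊,
    fun n hn S hS t ht => ?_⟩
  subst hS
  have hn : Real.exp (1 + 2 / g) ≤ #S := Nat.ceil_le.mp hn
  have hS0 : (0 : ℝ) < #S := (Real.exp_pos _).trans_le hn
  set L := Real.log #S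
  have hL : 1 + 2 / g ≤ L := by
    rw [← Real.log_exp (1 + 2 / g)]; exact Real.log_le_log (by positivity) hn
  have hL1 : 1 ≤ L := by linarith [div_pos two_pos hg]
  have hgL : 2 ≤ g * L := by rw [← div_le_iff₀' hg]; linarith
  have hq : 1 / L ≤ 1 := div_le_one_of_le₀ hL1 (by linarith)
  set T := (S ×ˢ S).filter (fun ab => t < #{x ∈ S | ab.1 < x ∧ x < ab.2})
  calc _ ≤ ∑ ab ∈ T, ∑ P ∈ S.powerset with #(P ∩ {x ∈ S | ab.1 < x ∧ x < ab.2}) < ⌈L ^ 2⌉₊,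
          (1 / L) ^ #P * (1 - 1 / L) ^ (#S - #P) := by
        refine sum_filter_le_sum_sum_filter (fun P _ => mul_nonneg (pow_nonneg (by positivity) _)
          (pow_nonneg (sub_nonneg.mpr hq) _)) fun P hP hbad => ?_
        obtain ⟨a, ha, b, hb, hab, hhits⟩ := exists_interval_of_badPivot (mem_powerset.mp hP) hbad
        exact ⟨(a, b), mem_filter.mpr ⟨mem_product.mpr ⟨ha, hb⟩, hab⟩, hhits⟩
    _ ≤ ∑ _ab ∈ T, Real.exp (-(g * L ^ 2)) := sum_le_sum fun ab hab =>
        sum_sample_few_hits_le (filter_subset _ _) hL1 hε.le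
          (ht.trans (mem_filter.mp hab).2.le)
    _ ≤ (#S : ℝ) ^ 2 * Real.exp (-(g * L ^ 2)) := by
        rw [sum_const, nsmul_eq_mul]
        gcongr
        exact_mod_cast (card_filter_le _ _).trans (card_product S S ▸ (sq #S).ge)
    _ ≤ #S * Real.exp (-(g / 2 * L ^ 2)) := sq_mul_exp_neg_le hS0 hg.le hgL
    _ = _ := by congr 2; field_simp
end

section
/- Grouping a 2-way butterfly network's layers r at a time yields a 2^r-way butterfly: for a 2-way butterfly on β = 2^{rL} bins, the set of elements in the level-(r·i) bins of the 2-way butterfly equals the set of elements in the level-i bins of the 2^r-way butterfly on the same input with the same labels, for every i ∈ {0,...,L}. -/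
/-- The bin holding, after layer `i` of a `γ`-way butterfly with `γ^L` bins, an
element that started in bin `p` and carries label `ℓ`. -/
def butterflyBin (γ L i p ℓ : ℕ) : ℕ :=
  ℓ / γ ^ (L - i) * γ ^ (L - i) + p % γ ^ (L - i)

/-- Grouping the layers of a 2-way butterfly on `β = 2^{rL}` bins `r` at a time
yields a `2^r`-way butterfly: for every level `i ≤ L` and every bin `b`, the set
of (start position, label) pairs residing in bin `b` at level `r·i` of the 2-way
butterfly equals the set residing in bin `b` at level `i` of the `2^r`-way
butterfly. -/
theorem stmt_7 (r L : ℕ) (hr : 1 ≤ r) :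
    ∀ i : ℕ, i ≤ L → ∀ b : ℕ,
      {pl : ℕ × ℕ | butterflyBin 2 (r * L) (r * i) pl.1 pl.2 = b} =
      {pl : ℕ × ℕ | butterflyBin (2 ^ r) L i pl.1 pl.2 = b} := by
  intro i hi b
  have h : r * L - r * i = r * (L - i) := by rw [Nat.mul_sub]
  have key : (2 : ℕ) ^ (r * L - r * i) = (2 ^ r) ^ (L - i) := by
    rw [h, pow_mul]
  simp [butterflyBin, key]
end

section
/- Correctness of the recursive butterfly decomposition: for β = β₁·β₂ bins, routing labeled elements by first solving β₁ independent subproblems on β₂ bins each (using the top log β₂ label bits), then transposing the β₁ × β₂ matrix of bins, then solving β₂ independent subproblems on β₁ bins each (using the bottom log β₁ label bits), places every element with label ℓ ∈ {0,...,β−1} into output bin ℓ. -/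
/-- Correctness of the recursive butterfly decomposition on `β = β₁·β₂` bins:
first route within each of the `β₁` partitions of `β₂` bins using the top label
bits (value `ℓ / β₁`), then transpose the `β₁ × β₂` matrix of bins, then route
within each of the `β₂` partitions of `β₁` bins using the bottom label bits
(value `ℓ % β₁`); every element with label `ℓ` ends in bin `ℓ`. -/
theorem stmt_8 (β₁ β₂ pos ℓ : ℕ) (h1 : 0 < β₁) (h2 : 0 < β₂)
    (hpos : pos < β₁ * β₂) (hℓ : ℓ < β₁ * β₂) :
    let after1 := pos / β₂ * β₂ + ℓ / β₁
    let afterT := after1 % β₂ * β₁ + after1 / β₂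
    let final := afterT / β₁ * β₁ + ℓ % β₁
    final = ℓ := by
  intro after1 afterT final
  have hl1 : ℓ / β₁ < β₂ := Nat.div_lt_of_lt_mul hℓ
  have hp1 : pos / β₂ < β₁ := Nat.div_lt_of_lt_mul (by rwa [mul_comm] at hpos)
  have hmod : after1 % β₂ = ℓ / β₁ := by
    show (pos / β₂ * β₂ + ℓ / β₁) % β₂ = ℓ / β₁
    rw [Nat.mul_add_mod', Nat.mod_eq_of_lt hl1]
  have hdiv : after1 / β₂ = pos / β₂ := by
    show (pos / β₂ * β₂ + ℓ / β₁) / β₂ = pos / β₂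
    rw [add_comm, Nat.add_mul_div_right _ _ h2, Nat.div_eq_of_lt hl1, zero_add]
  have hT : afterT = ℓ / β₁ * β₁ + pos / β₂ := by
    show after1 % β₂ * β₁ + after1 / β₂ = _
    rw [hmod, hdiv]
  have hTd : afterT / β₁ = ℓ / β₁ := by
    rw [hT, add_comm, Nat.add_mul_div_right _ _ h1, Nat.div_eq_of_lt hp1, zero_add]
  show afterT / β₁ * β₁ + ℓ % β₁ = ℓ
  rw [hTd, Nat.div_add_mod']
end

section
/- Correctness of the recursive bitonic merge decomposition: evaluating the first (1/2)·log m layers of a reverse butterfly (bitonic merge) network on m = k² inputs is equivalent to transposing the input viewed as a k × k matrix (row-major), applying a size-k reverse butterfly to each row, and transposing back. Precisely, after the first transposition, elements with original indices i and i' = i + m/2^j (for j ≤ (1/2)log m, with i mod (m/2^{j−1}) < m/2^j) lie in the same row at distance k/2^j, forming a size-k reverse butterfly within each row. -/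
/-- Correctness of the recursive bitonic-merge decomposition: on `m = k²` inputs
with `k = 2^s`, after transposing the input viewed as a `k × k` row-major matrix
(index `i` goes to row `i % k`, column `i / k`), the pair `(i, i + m/2^j)` of
layer `j ≤ (1/2)·log m = s` (where `i mod (m/2^{j−1}) < m/2^j`) lies in the same
row at column distance `k/2^j`, and the columns satisfy the pairing condition of
layer `j` of a size-`k` reverse butterfly. -/
theorem stmt_9 (s j i : ℕ) (hj1 : 1 ≤ j) (hjs : j ≤ s) :
    let k := 2 ^ s
    let m := k ^ 2
    i + m / 2 ^ j < m →
    i % (m / 2 ^ (j - 1)) < m / 2 ^ j →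
    ((i + m / 2 ^ j) % k = i % k ∧
     (i + m / 2 ^ j) / k = i / k + k / 2 ^ j ∧
     (i / k) % (k / 2 ^ (j - 1)) < k / 2 ^ j) := by
  intro k m h1 h2
  have hk : k = 2 ^ s := rfl
  have hm : m = 2 ^ (2 * s) := by
    show (2 ^ s) ^ 2 = 2 ^ (2 * s)
    rw [← pow_mul]; ring_nf
  have hpowdiv : ∀ a b : ℕ, b ≤ a → 2 ^ a / 2 ^ b = 2 ^ (a - b) := by
    intro a b hba
    rw [Nat.pow_div hba (by norm_num)]
  have e1 : m / 2 ^ j = 2 ^ (2 * s - j) := by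
    rw [hm, hpowdiv _ _ (by omega)]
  have e2 : m / 2 ^ (j - 1) = 2 ^ (2 * s - j + 1) := by
    rw [hm, hpowdiv _ _ (by omega)]
    congr 1; omega
  have e3 : k / 2 ^ j = 2 ^ (s - j) := by
    rw [hk, hpowdiv _ _ hjs]
  have e4 : k / 2 ^ (j - 1) = 2 ^ (s - j + 1) := by
    rw [hk, hpowdiv _ _ (by omega)]
    congr 1; omega
  have split : (2 : ℕ) ^ (2 * s - j) = 2 ^ (s - j) * 2 ^ s := by
    rw [← pow_add]; congr 1; omega
  refine ⟨?_, ?_, ?_⟩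
  · rw [e1, hk, split, Nat.add_mul_mod_self_right]
  · rw [e1, e3, hk, split, Nat.add_mul_div_right _ _ (by positivity)]
  · rw [e3, e4, hk]
    rw [e1, e2] at h2
    have hsplit2 : (2 : ℕ) ^ (2 * s - j + 1) = 2 ^ s * 2 ^ (s - j + 1) := by
      rw [← pow_add]; congr 1; omega
    rw [hsplit2] at h2
    rw [← Nat.mod_mul_right_div_self]
    rw [Nat.div_lt_iff_lt_mul (by positivity)]
    calc i % (2 ^ s * 2 ^ (s - j + 1)) < 2 ^ (2 * s - j) := h2
      _ = 2 ^ (s - j) * 2 ^ s := split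
end

section
/- Obliviousness via random permutation: let ORP be an algorithm whose access pattern distribution is independent of its input and whose output is a uniformly random permutation of its input array (independent of the access pattern), and let CSort be any deterministic comparison-based sorting algorithm (its sequence of comparisons and data movements depends only on the outcomes of comparisons of array elements). Then the composed algorithm CSort ∘ ORP applied to an array of n distinct elements has an access-pattern distribution that depends only on n, not on the input values or their order. -/
/-- Mapping the uniform distribution on a fintype by an equivalence gives back
the uniform distribution. -/
lemma uniform_map_equiv {α : Type*} [Fintype α] [Nonempty α] [DecidableEq α]
    (e : α ≃ α) :
    (PMF.uniformOfFintype α).map ⇑e = PMF.uniformOfFintype α := by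
  ext x
  rw [PMF.map_apply]
  rw [tsum_eq_single (e.symm x) (by
    intro b hb
    rw [if_neg]
    intro h
    exact hb (by simp [h]))]
  simp

/-- Obliviousness via random permutation: if `AP` is the access pattern of a
deterministic comparison-based sort (it depends only on the relative order of the
distinct inputs), and the oblivious random permutation's own access pattern is a
sample `a` from a distribution `μ` independent of the input and of the chosen
uniform permutation `σ`, then the joint access-pattern distribution of the
composition on input `v ∘ σ` is the same for all injective inputs `v`. -/
theorem stmt_13 (n : ℕ) (Pat PatO : Type) (AP : (Fin n → ℝ) → Pat)
    (hAP : ∀ x y : Fin n → ℝ, Function.Injective x → Function.Injective y →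
      (∀ i j, x i < x j ↔ y i < y j) → AP x = AP y)
    (μ : PMF PatO)
    (v w : Fin n → ℝ) (hv : Function.Injective v) (hw : Function.Injective w) :
    (μ.bind fun a => (PMF.uniformOfFintype (Equiv.Perm (Fin n))).map
        fun σ => (a, AP (v ∘ σ))) =
    (μ.bind fun a => (PMF.uniformOfFintype (Equiv.Perm (Fin n))).map
        fun σ => (a, AP (w ∘ σ))) := by
  set sv := Tuple.sort v with hsv
  set sw := Tuple.sort w with hsw
  have hvmono : StrictMono (v ∘ sv) :=
    (Tuple.monotone_sort v).strictMono_of_injective (hv.comp sv.injective)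
  have hwmono : StrictMono (w ∘ sw) :=
    (Tuple.monotone_sort w).strictMono_of_injective (hw.comp sw.injective)
  set τ : Equiv.Perm (Fin n) := sv.symm.trans sw with hτ
  have key : ∀ a b : Fin n, v a < v b ↔ w (τ a) < w (τ b) := by
    intro a b
    have h1 := hvmono.lt_iff_lt (a := sv.symm a) (b := sv.symm b)
    have h2 := hwmono.lt_iff_lt (a := sv.symm a) (b := sv.symm b)
    simp only [Function.comp_apply, Equiv.apply_symm_apply] at h1
    simp only [Function.comp_apply] at h2
    simp only [hτ, Equiv.trans_apply]
    exact h1.trans h2.symm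
  have hAPeq : ∀ σ : Equiv.Perm (Fin n), AP (v ∘ ⇑σ) = AP (w ∘ ⇑(τ * σ)) := by
    intro σ
    apply hAP _ _ (hv.comp σ.injective) (hw.comp (τ * σ).injective)
    intro i j
    simp only [Function.comp_apply, Equiv.Perm.mul_apply]
    exact key (σ i) (σ j)
  congr 1
  funext a
  show (PMF.map (fun σ : Fin n → Fin n => (a, AP (v ∘ σ)))
      ((PMF.uniformOfFintype (Equiv.Perm (Fin n))).map (fun e : Equiv.Perm (Fin n) => (e : Fin n → Fin n)))) =
    (PMF.map (fun σ : Fin n → Fin n => (a, AP (w ∘ σ)))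
      ((PMF.uniformOfFintype (Equiv.Perm (Fin n))).map (fun e : Equiv.Perm (Fin n) => (e : Fin n → Fin n))))
  rw [PMF.map_comp, PMF.map_comp]
  have hfun : ((fun σ : Fin n → Fin n => (a, AP (v ∘ σ))) ∘
        fun e : Equiv.Perm (Fin n) => (e : Fin n → Fin n)) =
      ((fun σ : Fin n → Fin n => (a, AP (w ∘ σ))) ∘
        fun e : Equiv.Perm (Fin n) => (e : Fin n → Fin n)) ∘ ⇑(Equiv.mulLeft τ) := by
    funext σ
    exact congrArg (Prod.mk a) (hAPeq σ)
  rw [hfun, ← PMF.map_comp, uniform_map_equiv]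
end

section
/- Segmented suffix sums via prefix/suffix scan: given an array of n elements where each element i carries a group identifier g(i) with all equal group identifiers consecutive (g is 'sorted into runs') and a value v(i) in a commutative monoid, the function A(i) = sum of v(j) over all j ≥ i with g(j) = g(i) can be computed by a single balanced-binary-tree suffix-scan with the combining operation (g₁,s₁) ⊕ (g₂,s₂) = (g₁, if g₁ = g₂ then s₁+s₂ else s₁), and this operation is associative on the set of (group, value) pairs arising from a run-sorted array. -/
/-- The segmented-sum combining operation `(g₁,s₁) ⊕ (g₂,s₂) = (g₁, if g₁ = g₂
then s₁+s₂ else s₁)`. -/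
def segOp {G M : Type} [DecidableEq G] [Add M] (x y : G × M) : G × M :=
  (x.1, if x.1 = y.1 then x.2 + y.2 else x.2)

/-- The suffix scan `a i ⊕ (a (i+1) ⊕ (⋯ ⊕ a (n−1)))` of positions `i,…,n−1`. -/
def suffixScan {G M : Type} [DecidableEq G] [Add M] (a : ℕ → G × M) (i n : ℕ) :
    G × M :=
  ((List.range' i (n - 1 - i)).map a).foldr segOp (a (n - 1))

lemma suffixScan_last {G M : Type} [DecidableEq G] [Add M] (a : ℕ → G × M) (n : ℕ)
    (h : n - 1 - (n-1) = 0 := by omega) : suffixScan a (n-1) n = a (n-1) := by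
  simp [suffixScan]

lemma suffixScan_step {G M : Type} [DecidableEq G] [Add M] (a : ℕ → G × M) (i n : ℕ)
    (h : i < n - 1) : suffixScan a i n = segOp (a i) (suffixScan a (i+1) n) := by
  unfold suffixScan
  have h1 : n - 1 - i = (n - 1 - (i+1)) + 1 := by omega
  rw [h1, List.range'_succ]
  simp

/-- Segmented suffix sums: on a run-sorted array (equal group identifiers are
consecutive), the operation `segOp` is associative on triples arising from the
array (i.e. whenever `g₁ = g₃ → g₁ = g₂`), and the suffix scan under `segOp`
produces at position `i` the pair `(g(i), Σ_{j ≥ i, g(j) = g(i)} v(j))`. -/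
theorem stmt_14 (G M : Type) [DecidableEq G] [AddCommMonoid M]
    (n : ℕ) (a : ℕ → G × M)
    (hruns : ∀ i k j : ℕ, i ≤ k → k ≤ j → j < n →
      (a i).1 = (a j).1 → (a i).1 = (a k).1) :
    (∀ x y z : G × M, (x.1 = z.1 → x.1 = y.1) →
      segOp (segOp x y) z = segOp x (segOp y z)) ∧
    (∀ i : ℕ, i < n →
      (suffixScan a i n).1 = (a i).1 ∧
      (suffixScan a i n).2 =
        ∑ j ∈ (Finset.Ico i n).filter (fun j => (a j).1 = (a i).1), (a j).2) := by
  constructor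
  · intro x y z hxyz
    simp only [segOp]
    by_cases hxy : x.1 = y.1
    · by_cases hyz : y.1 = z.1
      · simp [hxy, hyz, hxy.trans hyz, add_assoc]
      · have hxz : ¬ x.1 = z.1 := fun h => hyz (hxy.symm.trans h)
        simp [hxy, hyz, hxz]
    · have hxz : ¬ x.1 = z.1 := fun h => hxy (hxyz h)
      simp [hxy, hxz]
  · intro i hi
    obtain ⟨d, hd⟩ : ∃ d, n - 1 - i = d := ⟨_, rfl⟩
    induction d generalizing i with
    | zero =>
      have : i = n - 1 := by omega
      subst this
      rw [suffixScan_last a n (by omega)]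
      have : Finset.Ico (n-1) n = {n-1} := by
        rw [show n = (n-1) + 1 by omega]; simp
      simp [this, Finset.filter_singleton]
    | succ d ih =>
      have hi1 : i + 1 < n := by omega
      have IH := ih (i+1) hi1 (by omega)
      rw [suffixScan_step a i n (by omega)]
      refine ⟨rfl, ?_⟩
      have hsplit : Finset.Ico i n = insert i (Finset.Ico (i+1) n) := by
        ext j; simp only [Finset.mem_Ico, Finset.mem_insert]; omega
      by_cases h : (a i).1 = (a (i+1)).1
      · have : segOp (a i) (suffixScan a (i+1) n) =
            ((a i).1, (a i).2 + (suffixScan a (i+1) n).2) := by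
          simp [segOp, IH.1, h]
        rw [this]
        rw [hsplit, Finset.filter_insert, if_pos rfl, Finset.sum_insert (by simp)]
        dsimp only
        congr 1
        rw [IH.2]
        apply Finset.sum_congr
        · apply Finset.filter_congr
          intro j _
          simp [h]
        · intros; rfl
      · have : segOp (a i) (suffixScan a (i+1) n) = ((a i).1, (a i).2) := by
          simp [segOp, IH.1, h]
        rw [this]
        have hfilter : (Finset.Ico i n).filter (fun j => (a j).1 = (a i).1) = {i} := by
          ext j
          simp only [Finset.mem_filter, Finset.mem_Ico, Finset.mem_singleton]
          constructor
          · rintro ⟨⟨hij, hjn⟩, hg⟩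
            by_contra hne
            exact h (hruns i (i+1) j (by omega) (by omega) hjn hg.symm)
          · rintro rfl; exact ⟨⟨le_refl _, hi⟩, rfl⟩
        simp [hfilter]
end
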